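/- arXiv:0707.2151 — 7 statements merged into one kernel-verified Lean document; each statement's English description precedes it below -/
import Mathlib

section
/- Let q be a complex number with q^2 a primitive N-th root of unity and q^N = (-1)^{N+1}, and let y1, y2, y3 be nonzero complex numbers. Define endomorphisms X1, X2, X3 of C^N (with basis e_0,...,e_{N-1}, indices mod N) by X1(e_i) = y1 q^{2i} e_i, X2(e_i) = y2 e_{i+1}, X3(e_i) = y3 q^{1-2i} e_{i-1}. Then X1X2 = q^2 X2X1, X2X3 = q^2 X3X2, and X3X1 = q^2 X1X3. -/
/-- `X1 e_i = y1 q^{2i} e_i`. -/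
noncomputable def triX1 (N : ℕ) (q y1 : ℂ) : Matrix (Fin N) (Fin N) ℂ :=
  Matrix.diagonal fun i => y1 * q ^ (2 * (i : ℕ))

/-- `X2 e_i = y2 e_{i+1}` (indices mod `N`). -/
noncomputable def triX2 (N : ℕ) [NeZero N] (y2 : ℂ) : Matrix (Fin N) (Fin N) ℂ :=
  Matrix.of fun j i => if j = i + 1 then y2 else 0

/-- `X3 e_i = y3 q^{1-2i} e_{i-1}` (indices mod `N`). -/
noncomputable def triX3 (N : ℕ) [NeZero N] (q y3 : ℂ) : Matrix (Fin N) (Fin N) ℂ :=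
  Matrix.of fun j i => if j = i - 1 then y3 * q ^ ((1 : ℤ) - 2 * ((i : ℕ) : ℤ)) else 0

/-!
All three relations reduce to the fact that, since `ζ = q ^ 2` satisfies `ζ ^ N = 1`, the map
`i ↦ ζ ^ i` is well defined on indices mod `N`, so the weight `q ^ (2 i)` of `X1` and the
weight `q ^ (1 - 2 i) = q ζ⁻ⁱ` of `X3` change by the factor `ζ` resp. `ζ⁻¹` under `i ↦ i + 1`.
-/

theorem pow_val_add_of_pow_eq_one {M : Type*} [Monoid M] {N : ℕ} {ζ : M} (h : ζ ^ N = 1)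
    (a b : Fin N) : ζ ^ ((a + b : Fin N) : ℕ) = ζ ^ (a : ℕ) * ζ ^ (b : ℕ) := by
  rw [Fin.val_add, ← pow_eq_pow_mod _ h, pow_add]

theorem pow_val_add_one_of_pow_eq_one {M : Type*} [Monoid M] {N : ℕ} [NeZero N] {ζ : M}
    (h : ζ ^ N = 1) (i : Fin N) : ζ ^ ((i + 1 : Fin N) : ℕ) = ζ ^ (i : ℕ) * ζ := by
  rw [pow_val_add_of_pow_eq_one h, Fin.val_one', ← pow_eq_pow_mod _ h, pow_one]

theorem zpow_one_sub_two_mul {K : Type*} [DivisionRing K] {q : K} (hq : q ≠ 0) (m : ℕ) :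
    q ^ ((1 : ℤ) - 2 * (m : ℤ)) = q * ((q ^ 2) ^ m)⁻¹ := by
  rw [zpow_sub₀ hq, zpow_one, div_eq_mul_inv, ← pow_mul, ← zpow_natCast]
  push_cast
  rfl

section Relations

variable {N : ℕ} [NeZero N] {q : ℂ}

theorem triX1_mul_triX2 (h : (q ^ 2) ^ N = 1) (y1 y2 : ℂ) :
    triX1 N q y1 * triX2 N y2 = (q ^ 2) • (triX2 N y2 * triX1 N q y1) := by
  ext j i
  simp only [triX1, triX2, Matrix.diagonal_mul, Matrix.mul_diagonal, Matrix.smul_apply,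
    Matrix.of_apply, smul_eq_mul, ite_mul, zero_mul, mul_ite, mul_zero]
  split_ifs with hji
  · rw [hji, pow_mul, pow_val_add_one_of_pow_eq_one h, pow_mul]
    ring
  · rfl

theorem triX3_mul_triX1 (h : (q ^ 2) ^ N = 1) (y1 y3 : ℂ) :
    triX3 N q y3 * triX1 N q y1 = (q ^ 2) • (triX1 N q y1 * triX3 N q y3) := by
  ext j i
  simp only [triX1, triX3, Matrix.diagonal_mul, Matrix.mul_diagonal, Matrix.smul_apply,
    Matrix.of_apply, smul_eq_mul, ite_mul, zero_mul, mul_ite, mul_zero]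
  split_ifs with hji
  · have hi : i = j + 1 := by rw [hji, sub_add_cancel]
    rw [hi, pow_mul, pow_val_add_one_of_pow_eq_one h, pow_mul]
    ring
  · rfl

theorem triX2_mul_triX3 (h : (q ^ 2) ^ N = 1) (y2 y3 : ℂ) :
    triX2 N y2 * triX3 N q y3 = (q ^ 2) • (triX3 N q y3 * triX2 N y2) := by
  have hq : q ≠ 0 := by
    rintro rfl
    simp [NeZero.ne N] at h
  ext j i
  simp only [triX2, triX3, Matrix.mul_apply, Matrix.smul_apply, Matrix.of_apply, smul_eq_mul,
    mul_ite, ite_mul, mul_zero, zero_mul, Finset.sum_ite_eq', Finset.mem_univ, if_true,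
    sub_add_cancel, add_sub_cancel_right]
  split_ifs with hji
  · rw [zpow_one_sub_two_mul hq, zpow_one_sub_two_mul hq,
      pow_val_add_one_of_pow_eq_one h, mul_inv]
    field_simp
  · simp

end Relations

theorem triangle_standard_relations_general (N : ℕ) [NeZero N] (q : ℂ)
    (hq : IsPrimitiveRoot (q ^ 2) N)
    (y1 y2 y3 : ℂ) :
    triX1 N q y1 * triX2 N y2 = (q ^ 2) • (triX2 N y2 * triX1 N q y1) ∧
    triX2 N y2 * triX3 N q y3 = (q ^ 2) • (triX3 N q y3 * triX2 N y2) ∧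
    triX3 N q y3 * triX1 N q y1 = (q ^ 2) • (triX1 N q y1 * triX3 N q y3) :=
  ⟨triX1_mul_triX2 hq.pow_eq_one y1 y2, triX2_mul_triX3 hq.pow_eq_one y2 y3,
    triX3_mul_triX1 hq.pow_eq_one y1 y3⟩

/-- The standard operators satisfy the triangle-algebra commutation relations. -/
theorem triangle_standard_relations (N : ℕ) [NeZero N] (q : ℂ)
    (hq : IsPrimitiveRoot (q ^ 2) N) (hqN : q ^ N = (-1 : ℂ) ^ (N + 1))
    (y1 y2 y3 : ℂ) (hy1 : y1 ≠ 0) (hy2 : y2 ≠ 0) (hy3 : y3 ≠ 0) :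
    triX1 N q y1 * triX2 N y2 = (q ^ 2) • (triX2 N y2 * triX1 N q y1) ∧
    triX2 N y2 * triX3 N q y3 = (q ^ 2) • (triX3 N q y3 * triX2 N y2) ∧
    triX3 N q y3 * triX1 N q y1 = (q ^ 2) • (triX1 N q y1 * triX3 N q y3) :=
  triangle_standard_relations_general N q hq y1 y2 y3
end

section
/- With q, N as above and the operators X1, X2, X3 on C^N defined from nonzero scalars y1, y2, y3, the resulting representation of the triangle algebra is irreducible: any linear subspace of C^N invariant under X1, X2, X3 is 0 or all of C^N. -/
open Polynomial Matrix

section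

variable {K n : Type*} [Field K] [DecidableEq n] {W : Submodule K (n → K)}

theorem Submodule.eval_mul_mem_of_diagonal_invariant [Fintype n] {d : n → K}
    (hW : ∀ v ∈ W, diagonal d *ᵥ v ∈ W) {v : n → K} (hv : v ∈ W) (p : K[X]) :
    (fun j => p.eval (d j) * v j) ∈ W := by
  have := aeval_apply_smul_mem_of_le_comap hv p (toLinAlgEquiv' (diagonalAlgHom K d)) hW
  rw [aeval_algEquiv, AlgHom.comp_apply, aeval_algHom_apply, aeval_pi_apply] at this
  convert this using 1
  ext j
  simp [toLinAlgEquiv'_apply, mulVec_diagonal]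

theorem Submodule.pi_single_apply_mem_of_diagonal_invariant [Fintype n] {d : n → K}
    (hd : Function.Injective d) (hW : ∀ v ∈ W, diagonal d *ᵥ v ∈ W) {v : n → K}
    (hv : v ∈ W) (i : n) : Pi.single i (v i) ∈ W := by
  convert W.eval_mul_mem_of_diagonal_invariant hW hv (Lagrange.basis Finset.univ d i) using 1
  ext j
  rcases eq_or_ne j i with rfl | hji
  · rw [Lagrange.eval_basis_self hd.injOn (Finset.mem_univ j), Pi.single_eq_same, one_mul]
  · rw [Lagrange.eval_basis_of_ne hji.symm (Finset.mem_univ j), Pi.single_eq_of_ne hji, zero_mul]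

theorem Submodule.pi_single_mem_iff (i : n) {c : K} (hc : c ≠ 0) :
    Pi.single i c ∈ W ↔ Pi.single i 1 ∈ W := by
  rw [← mul_one c, ← smul_eq_mul, Pi.single_smul, W.smul_mem_iff hc]

theorem Submodule.eq_top_of_forall_pi_single_mem [Finite n] (h : ∀ i, Pi.single i 1 ∈ W) :
    W = ⊤ := by
  rw [eq_top_iff, ← (Pi.basisFun K n).span_eq, Submodule.span_le, Set.range_subset_iff]
  simpa using h

end

theorem Fin.add_one_induction {N : ℕ} [NeZero N] {P : Fin N → Prop} {i : Fin N} (hi : P i)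
    (hstep : ∀ j, P j → P (j + 1)) (j : Fin N) : P j := by
  obtain ⟨n, rfl⟩ := Nat.exists_eq_succ_of_ne_zero (NeZero.ne N)
  have hshift : ∀ k : Fin (n + 1), P (i + k) := fun k => by
    induction k using Fin.induction with
    | zero => simpa using hi
    | succ k ih => simpa [← Fin.coeSucc_eq_succ, add_assoc] using hstep _ ih
  simpa using hshift (j - i)

theorem triX1_diag_injective {N : ℕ} {q : ℂ} (hq : IsPrimitiveRoot (q ^ 2) N) {y1 : ℂ}
    (hy1 : y1 ≠ 0) : Function.Injective fun i : Fin N => y1 * q ^ (2 * (i : ℕ)) := by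
  intro a b hab
  simp only [pow_mul, mul_right_inj' hy1] at hab
  exact Fin.ext (hq.pow_inj a.isLt b.isLt hab)

theorem triX2_mulVec_single {N : ℕ} [NeZero N] (y2 : ℂ) (j : Fin N) :
    triX2 N y2 *ᵥ Pi.single j 1 = Pi.single (j + 1) y2 := by
  ext k
  simp [triX2, Pi.single_apply]

theorem triangle_standard_irreducible_general (N : ℕ) [NeZero N] (q : ℂ)
    (hq : IsPrimitiveRoot (q ^ 2) N)
    (y1 y2 y3 : ℂ) (hy1 : y1 ≠ 0) (hy2 : y2 ≠ 0) :
    ∀ W : Submodule ℂ (Fin N → ℂ),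
      (∀ v ∈ W, (triX1 N q y1).mulVec v ∈ W) →
      (∀ v ∈ W, (triX2 N y2).mulVec v ∈ W) →
      (∀ v ∈ W, (triX3 N q y3).mulVec v ∈ W) →
      W = ⊥ ∨ W = ⊤ := by
  intro W hX1 hX2 _
  refine or_iff_not_imp_left.2 fun hW => W.eq_top_of_forall_pi_single_mem ?_
  obtain ⟨v, hvW, hv0⟩ := W.exists_mem_ne_zero_of_ne_bot hW
  obtain ⟨i, hvi⟩ := Function.ne_iff.1 hv0
  have hi : Pi.single i 1 ∈ W := (W.pi_single_mem_iff i hvi).1 <|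
    W.pi_single_apply_mem_of_diagonal_invariant (triX1_diag_injective hq hy1) hX1 hvW i
  refine Fin.add_one_induction hi fun j hj => ?_
  rw [← W.pi_single_mem_iff (j + 1) hy2, ← triX2_mulVec_single]
  exact hX2 _ hj

/-- The standard `N`-dimensional representation of the triangle algebra is irreducible:
any subspace invariant under `X1, X2, X3` is `0` or everything. -/
theorem triangle_standard_irreducible (N : ℕ) [NeZero N] (q : ℂ)
    (hq : IsPrimitiveRoot (q ^ 2) N) (hqN : q ^ N = (-1 : ℂ) ^ (N + 1))
    (y1 y2 y3 : ℂ) (hy1 : y1 ≠ 0) (hy2 : y2 ≠ 0) (hy3 : y3 ≠ 0) :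
    ∀ W : Submodule ℂ (Fin N → ℂ),
      (∀ v ∈ W, (triX1 N q y1).mulVec v ∈ W) →
      (∀ v ∈ W, (triX2 N y2).mulVec v ∈ W) →
      (∀ v ∈ W, (triX3 N q y3).mulVec v ∈ W) →
      W = ⊥ ∨ W = ⊤ :=
  triangle_standard_irreducible_general N q hq y1 y2 y3 hy1 hy2
end

section
/- Two irreducible finite-dimensional representations rho and rho' of the triangle algebra (with q^2 a primitive N-th root of unity, q^N = (-1)^{N+1}) are isomorphic if and only if they determine the same scalars x1, x2, x3 (where rho(X_i^N) = x_i Id) and the same h (where rho(H) = h Id, H = q^{-1}X1X2X3). -/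
/-!
The scalars `x_i` and `h` are images of central elements, so conjugation by an intertwiner
preserves them. Conversely, `X3` is a scalar multiple of `X2 ^ (N - 1) * X1 ^ (N - 1)`, so a
representation is already irreducible under `X1` and `X2`. If `v` is an eigenvector of `X1` with
eigenvalue `μ`, the vectors `X2 ^ j v` (`j < N`) are eigenvectors with the distinct eigenvalues
`q ^ (2 j) μ`, hence a basis, on which `X1` and `X2` act through `μ` and `x2` only. Every `N`-th
root `μ` of `x1` occurs as such an eigenvalue, so choosing the same `μ` in both representations and
matching the two bases gives the isomorphism.
-/

open Module

namespace TriangleAlgebra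

section Algebra

variable {K R : Type*} [Field K] [Ring R] [Algebra K R]

theorem ne_zero_of_isUnit_of_pow_eq_smul_one [Nontrivial R] {a : R} {c : K} {n : ℕ}
    (ha : IsUnit a) (h : a ^ n = c • 1) : c ≠ 0 := by
  rintro rfl
  rw [zero_smul] at h
  exact (ha.pow n).ne_zero h

theorem isUnit_of_pow_eq_smul_one {a : R} {c : K} {n : ℕ} (hn : n ≠ 0) (hc : c ≠ 0)
    (h : a ^ n = c • 1) : IsUnit a := by
  rw [← isUnit_pow_iff hn, h, ← Algebra.algebraMap_eq_smul_one]
  exact (IsUnit.mk0 c hc).map (algebraMap K R)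

theorem pow_eq_smul_pow_mod {a : R} {c : K} {n : ℕ} (h : a ^ n = c • 1) (j : ℕ) :
    a ^ j = c ^ (j / n) • a ^ (j % n) := by
  conv_lhs => rw [← Nat.div_add_mod j n, pow_add, pow_mul, h, smul_pow, one_pow, smul_one_mul]

theorem mul_pow_eq_smul_pow_mul {a b : R} {ζ : K} (h : a * b = ζ • (b * a)) (j : ℕ) :
    a * b ^ j = ζ ^ j • (b ^ j * a) := by
  induction j with
  | zero => simp
  | succ j ih =>
    rw [pow_succ, ← mul_assoc, ih, smul_mul_assoc, mul_assoc, h, mul_smul_comm, smul_smul,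
      ← mul_assoc, pow_succ]

theorem eq_smul_pow_mul_pow_of_mul_mul_eq {a b d : R} {α β γ : K} {n : ℕ} (hn : n ≠ 0)
    (ha : a ^ n = α • 1) (hb : b ^ n = β • 1) (habd : a * b * d = γ • 1) (hαβ : α * β ≠ 0) :
    d = ((α * β)⁻¹ * γ) • (b ^ (n - 1) * a ^ (n - 1)) := by
  have : (α * β) • d = γ • (b ^ (n - 1) * a ^ (n - 1)) := by
    calc (α * β) • d = b ^ (n - 1) * (a ^ (n - 1) * a) * b * d := by
          rw [pow_sub_one_mul hn, ha, mul_smul_one, smul_mul_assoc, smul_mul_assoc,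
            pow_sub_one_mul hn, hb, smul_one_mul, smul_smul]
      _ = b ^ (n - 1) * a ^ (n - 1) * (a * b * d) := by noncomm_ring
      _ = γ • (b ^ (n - 1) * a ^ (n - 1)) := by rw [habd, mul_smul_one]
  rw [mul_smul, ← this, inv_smul_smul₀ hαβ]

theorem eq_of_algHom_apply_eq {S F : Type*} [Ring S] [Algebra K S] [Nontrivial S]
    [FunLike F R S] [AlgHomClass F K R S] (f : F) {a : R} {b : S} {c c' : K} (hab : f a = b)
    (ha : a = c • 1) (hb : b = c' • 1) : c = c' := by
  rw [ha, hb, map_smul, map_one, ← Algebra.algebraMap_eq_smul_one,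
    ← Algebra.algebraMap_eq_smul_one] at hab
  exact (algebraMap K S).injective hab

end Algebra

section Module

variable {K M M' : Type*} [Field K] [AddCommGroup M] [Module K M] [AddCommGroup M'] [Module K M']

theorem conjAlgEquiv_eq_iff (L : M ≃ₗ[K] M') (f : End K M) (g : End K M') :
    L.conjAlgEquiv K f = g ↔ ∀ x, L (f x) = g (L x) := by
  refine ⟨fun h x => by simp [← h, LinearEquiv.conjAlgEquiv_apply], fun h => ?_⟩
  ext y
  simp [LinearEquiv.conjAlgEquiv_apply, h]

theorem mapsTo_smul_pow_mul_pow {W : Submodule K M} {f g : End K M} (hf : Set.MapsTo f W W)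
    (hg : Set.MapsTo g W W) (c : K) (m n : ℕ) : Set.MapsTo (c • (g ^ m * f ^ n)) W W := by
  intro v hv
  simp only [LinearMap.smul_apply, End.mul_apply, End.coe_pow]
  exact W.smul_mem c (hg.iterate m (hf.iterate n hv))

theorem pow_eq_of_hasEigenvector {f : End K M} {μ c : K} {v : M} {n : ℕ}
    (hv : f.HasEigenvector μ v) (h : f ^ n = c • 1) : μ ^ n = c := by
  have := hv.pow_apply n
  rw [h, LinearMap.smul_apply, End.one_apply] at this
  exact smul_left_injective K hv.2 this.symm

theorem injective_of_pow_eq_smul_one {f : End K M} {c : K} {n : ℕ} (hn : n ≠ 0) (hc : c ≠ 0)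
    (h : f ^ n = c • 1) : Function.Injective f :=
  ((End.isUnit_iff f).mp (isUnit_of_pow_eq_smul_one hn hc h)).injective

theorem apply_pow_apply_of_apply_eq_smul {A B : End K M} {ζ μ : K} {v : M}
    (h : A * B = ζ • (B * A)) (hv : A v = μ • v) (j : ℕ) :
    A ((B ^ j) v) = (ζ ^ j * μ) • (B ^ j) v := by
  have := congr($(mul_pow_eq_smul_pow_mul h j) v)
  simpa [End.mul_apply, hv, smul_smul] using this

theorem hasEigenvector_pow_apply {A B : End K M} {ζ μ : K} {v : M} (h : A * B = ζ • (B * A))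
    (hB : Function.Injective B) (hv : A.HasEigenvector μ v) (j : ℕ) :
    A.HasEigenvector (ζ ^ j * μ) ((B ^ j) v) := by
  have hBj : Function.Injective (B ^ j) := by rw [End.coe_pow]; exact hB.iterate j
  exact End.hasEigenvector_iff.mpr ⟨End.mem_eigenspace_iff.mpr
    (apply_pow_apply_of_apply_eq_smul h hv.apply_eq_smul j),
    fun h0 => hv.2 (hBj (h0.trans (map_zero _).symm))⟩

def IsIrreduciblePair (A B : End K M) : Prop :=
  ∀ W : Submodule K M, (∀ x ∈ W, A x ∈ W) → (∀ x ∈ W, B x ∈ W) → W = ⊥ ∨ W = ⊤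

variable {N : ℕ} [NeZero N] {ζ : K}

theorem exists_hasEigenvector_of_pow_eq [IsAlgClosed K] [FiniteDimensional K M] [Nontrivial M]
    (hζ : IsPrimitiveRoot ζ N) {A B : End K M} {a b ν : K} (h : A * B = ζ • (B * A))
    (hb : b ≠ 0) (hBN : B ^ N = b • 1) (hAN : A ^ N = a • 1) (hν : ν ^ N = a) :
    ∃ v, A.HasEigenvector ν v := by
  obtain ⟨μ, hμ⟩ := End.exists_eigenvalue A
  obtain ⟨v, hv⟩ := hμ.exists_hasEigenvector
  have hνμ : ν ^ N = μ ^ N := hν.trans (pow_eq_of_hasEigenvector hv hAN).symm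
  rcases eq_or_ne μ 0 with rfl | hμ0
  · rw [zero_pow (NeZero.ne N), pow_eq_zero_iff (NeZero.ne N)] at hνμ
    exact ⟨v, hνμ ▸ hv⟩
  obtain ⟨i, -, hi⟩ := hζ.eq_pow_of_pow_eq_one (ξ := ν / μ)
    (by rw [div_pow, hνμ, div_self (pow_ne_zero N hμ0)])
  refine ⟨(B ^ i) v, ?_⟩
  simpa [hi, div_mul_cancel₀ ν hμ0] using
    hasEigenvector_pow_apply h (injective_of_pow_eq_smul_one (NeZero.ne N) hb hBN) hv i

theorem exists_basis_pow_apply (hζ : IsPrimitiveRoot ζ N) {A B : End K M} {b μ : K} {v : M}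
    (h : A * B = ζ • (B * A)) (hb : b ≠ 0) (hBN : B ^ N = b • 1) (hirr : IsIrreduciblePair A B)
    (hv : A.HasEigenvector μ v) (hμ : μ ≠ 0) :
    ∃ β : Basis (Fin N) K M, ∀ j, β j = (B ^ (j : ℕ)) v := by
  set u : Fin N → M := fun j => (B ^ (j : ℕ)) v
  have hB := injective_of_pow_eq_smul_one (NeZero.ne N) hb hBN
  have hu : ∀ j : Fin N, A.HasEigenvector (ζ ^ (j : ℕ) * μ) (u j) :=
    fun j => hasEigenvector_pow_apply h hB hv j
  have hli : LinearIndependent K u := End.eigenvectors_linearIndependent' A _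
    (fun i j hij => Fin.ext (hζ.pow_inj i.isLt j.isLt (mul_right_cancel₀ hμ hij))) u hu
  set W := Submodule.span K (Set.range u)
  have hW : ∀ f : End K M, (∀ j, f (u j) ∈ W) → ∀ x ∈ W, f x ∈ W := fun f hf x hx =>
    (Submodule.span_le (p := W.comap f)).mpr (Set.range_subset_iff.mpr hf) hx
  have hWA : ∀ x ∈ W, A x ∈ W := hW A fun j => by
    rw [(hu j).apply_eq_smul]
    exact W.smul_mem _ (Submodule.subset_span ⟨j, rfl⟩)
  have hWB : ∀ x ∈ W, B x ∈ W := hW B fun j => by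
    rw [← End.mul_apply, ← pow_succ', pow_eq_smul_pow_mod hBN, LinearMap.smul_apply]
    exact W.smul_mem _ (Submodule.subset_span ⟨⟨_, Nat.mod_lt _ (NeZero.pos N)⟩, rfl⟩)
  have hWtop : W = ⊤ := (hirr W hWA hWB).resolve_left fun hbot =>
    (hu 0).2 ((Submodule.mem_bot K).mp (hbot ▸ Submodule.subset_span ⟨0, rfl⟩))
  exact ⟨Basis.mk hli hWtop.ge, fun j => Basis.mk_apply _ _ j⟩

theorem exists_linearEquiv_conjAlgEquiv_eq (hζ : IsPrimitiveRoot ζ N) {A B : End K M}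
    {A' B' : End K M'} {b μ : K} {v : M} {v' : M'} (h : A * B = ζ • (B * A))
    (h' : A' * B' = ζ • (B' * A')) (hb : b ≠ 0) (hBN : B ^ N = b • 1) (hB'N : B' ^ N = b • 1)
    (hirr : IsIrreduciblePair A B) (hirr' : IsIrreduciblePair A' B')
    (hv : A.HasEigenvector μ v) (hv' : A'.HasEigenvector μ v') (hμ : μ ≠ 0) :
    ∃ L : M ≃ₗ[K] M', L.conjAlgEquiv K A = A' ∧ L.conjAlgEquiv K B = B' := by
  obtain ⟨β, hβ⟩ := exists_basis_pow_apply hζ h hb hBN hirr hv hμ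
  obtain ⟨β', hβ'⟩ := exists_basis_pow_apply hζ h' hb hB'N hirr' hv' hμ
  let L := β.equiv β' (Equiv.refl _)
  have hL : ∀ j : ℕ, L ((B ^ j) v) = (B' ^ j) v' := by
    intro j
    have := β.equiv_apply ⟨j % N, Nat.mod_lt _ (NeZero.pos N)⟩ β' (Equiv.refl _)
    rw [hβ, Equiv.refl_apply, hβ'] at this
    rw [pow_eq_smul_pow_mod hBN, pow_eq_smul_pow_mod hB'N, LinearMap.smul_apply,
      LinearMap.smul_apply, map_smul, this]
  have hext : ∀ (f : End K M) (f' : End K M'),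
      (∀ j : ℕ, L (f ((B ^ j) v)) = f' (L ((B ^ j) v))) → L.conjAlgEquiv K f = f' :=
    fun f f' hf => (conjAlgEquiv_eq_iff L f f').mpr fun x => LinearMap.congr_fun
      (β.ext (f₁ := L.toLinearMap ∘ₗ f) (f₂ := f' ∘ₗ L.toLinearMap) fun j => by
        simpa [hβ] using hf j) x
  refine ⟨L, hext A A' fun j => ?_, hext B B' fun j => ?_⟩
  · rw [apply_pow_apply_of_apply_eq_smul h hv.apply_eq_smul, map_smul, hL,
      apply_pow_apply_of_apply_eq_smul h' hv'.apply_eq_smul]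
  · rw [← End.mul_apply B, ← pow_succ', hL, hL, pow_succ', End.mul_apply]

end Module

end TriangleAlgebra

open TriangleAlgebra

theorem triangle_irreducible_classification_general {N : ℕ} (hN : 0 < N) (q : ℂ)
    (hq : IsPrimitiveRoot (q ^ 2) N)
    {V V' : Type*} [AddCommGroup V] [Module ℂ V] [FiniteDimensional ℂ V] [Nontrivial V]
    [AddCommGroup V'] [Module ℂ V'] [FiniteDimensional ℂ V'] [Nontrivial V']
    (X1 X2 X3 : Module.End ℂ V) (Y1 Y2 Y3 : Module.End ℂ V')
    (hu1 : IsUnit X1) (hu2 : IsUnit X2)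
    (rX12 : X1 * X2 = (q ^ 2) • (X2 * X1))
    (rY12 : Y1 * Y2 = (q ^ 2) • (Y2 * Y1))
    (hirrX : ∀ W : Submodule ℂ V, (∀ v ∈ W, X1 v ∈ W) → (∀ v ∈ W, X2 v ∈ W) →
      (∀ v ∈ W, X3 v ∈ W) → W = ⊥ ∨ W = ⊤)
    (hirrY : ∀ W : Submodule ℂ V', (∀ v ∈ W, Y1 v ∈ W) → (∀ v ∈ W, Y2 v ∈ W) →
      (∀ v ∈ W, Y3 v ∈ W) → W = ⊥ ∨ W = ⊤)
    (x1 x2 x3 h x1' x2' x3' h' : ℂ)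
    (hX1N : X1 ^ N = x1 • (1 : Module.End ℂ V))
    (hX2N : X2 ^ N = x2 • (1 : Module.End ℂ V))
    (hX3N : X3 ^ N = x3 • (1 : Module.End ℂ V))
    (hXH : q⁻¹ • (X1 * X2 * X3) = h • (1 : Module.End ℂ V))
    (hY1N : Y1 ^ N = x1' • (1 : Module.End ℂ V'))
    (hY2N : Y2 ^ N = x2' • (1 : Module.End ℂ V'))
    (hY3N : Y3 ^ N = x3' • (1 : Module.End ℂ V'))
    (hYH : q⁻¹ • (Y1 * Y2 * Y3) = h' • (1 : Module.End ℂ V')) :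
    (∃ L : V ≃ₗ[ℂ] V', (∀ v, L (X1 v) = Y1 (L v)) ∧ (∀ v, L (X2 v) = Y2 (L v)) ∧
      (∀ v, L (X3 v) = Y3 (L v))) ↔
    (x1 = x1' ∧ x2 = x2' ∧ x3 = x3' ∧ h = h') := by
  constructor
  · rintro ⟨L, hL1, hL2, hL3⟩
    rw [← conjAlgEquiv_eq_iff] at hL1 hL2 hL3
    exact ⟨eq_of_algHom_apply_eq (L.conjAlgEquiv ℂ) (by rw [map_pow, hL1]) hX1N hY1N,
      eq_of_algHom_apply_eq (L.conjAlgEquiv ℂ) (by rw [map_pow, hL2]) hX2N hY2N,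
      eq_of_algHom_apply_eq (L.conjAlgEquiv ℂ) (by rw [map_pow, hL3]) hX3N hY3N,
      eq_of_algHom_apply_eq (L.conjAlgEquiv ℂ)
        (by rw [map_smul, map_mul, map_mul, hL1, hL2, hL3]) hXH hYH⟩
  · rintro ⟨rfl, rfl, rfl, rfl⟩
    have : NeZero N := ⟨hN.ne'⟩
    have hq0 : q ≠ 0 := fun h0 => hq.ne_zero hN.ne' (by rw [h0, zero_pow two_ne_zero])
    have hx1 : x1 ≠ 0 := ne_zero_of_isUnit_of_pow_eq_smul_one hu1 hX1N
    have hx2 : x2 ≠ 0 := ne_zero_of_isUnit_of_pow_eq_smul_one hu2 hX2N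
    have hX3 := eq_smul_pow_mul_pow_of_mul_mul_eq hN.ne' hX1N hX2N
      (by rw [← smul_smul, ← hXH, smul_inv_smul₀ hq0]) (mul_ne_zero hx1 hx2)
    have hY3 := eq_smul_pow_mul_pow_of_mul_mul_eq hN.ne' hY1N hY2N
      (by rw [← smul_smul, ← hYH, smul_inv_smul₀ hq0]) (mul_ne_zero hx1 hx2)
    obtain ⟨μ, hμ⟩ := IsAlgClosed.exists_pow_nat_eq x1 hN
    have hμ0 : μ ≠ 0 := ne_zero_pow hN.ne' (hμ ▸ hx1)
    obtain ⟨v, hv⟩ := exists_hasEigenvector_of_pow_eq hq rX12 hx2 hX2N hX1N hμ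
    obtain ⟨w, hw⟩ := exists_hasEigenvector_of_pow_eq hq rY12 hx2 hY2N hY1N hμ
    obtain ⟨L, e1, e2⟩ := exists_linearEquiv_conjAlgEquiv_eq hq rX12 rY12 hx2 hX2N hY2N
      (fun W h1 h2 => hirrX W h1 h2 (hX3 ▸ mapsTo_smul_pow_mul_pow h1 h2 _ _ _))
      (fun W h1 h2 => hirrY W h1 h2 (hY3 ▸ mapsTo_smul_pow_mul_pow h1 h2 _ _ _)) hv hw hμ0
    have e3 : L.conjAlgEquiv ℂ X3 = Y3 := by
      rw [hX3, hY3, map_smul, map_mul, map_pow, map_pow, e1, e2]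
    exact ⟨L, (conjAlgEquiv_eq_iff L _ _).mp e1, (conjAlgEquiv_eq_iff L _ _).mp e2,
      (conjAlgEquiv_eq_iff L _ _).mp e3⟩

/-- Two irreducible finite-dimensional representations of the triangle algebra are
isomorphic if and only if they determine the same scalars `x1, x2, x3, h`. -/
theorem triangle_irreducible_classification {N : ℕ} (hN : 0 < N) (q : ℂ)
    (hq : IsPrimitiveRoot (q ^ 2) N) (hqN : q ^ N = (-1 : ℂ) ^ (N + 1))
    {V V' : Type*} [AddCommGroup V] [Module ℂ V] [FiniteDimensional ℂ V] [Nontrivial V]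
    [AddCommGroup V'] [Module ℂ V'] [FiniteDimensional ℂ V'] [Nontrivial V']
    (X1 X2 X3 : Module.End ℂ V) (Y1 Y2 Y3 : Module.End ℂ V')
    (hu1 : IsUnit X1) (hu2 : IsUnit X2) (hu3 : IsUnit X3)
    (hv1 : IsUnit Y1) (hv2 : IsUnit Y2) (hv3 : IsUnit Y3)
    (rX12 : X1 * X2 = (q ^ 2) • (X2 * X1))
    (rX23 : X2 * X3 = (q ^ 2) • (X3 * X2))
    (rX31 : X3 * X1 = (q ^ 2) • (X1 * X3))
    (rY12 : Y1 * Y2 = (q ^ 2) • (Y2 * Y1))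
    (rY23 : Y2 * Y3 = (q ^ 2) • (Y3 * Y2))
    (rY31 : Y3 * Y1 = (q ^ 2) • (Y1 * Y3))
    (hirrX : ∀ W : Submodule ℂ V, (∀ v ∈ W, X1 v ∈ W) → (∀ v ∈ W, X2 v ∈ W) →
      (∀ v ∈ W, X3 v ∈ W) → W = ⊥ ∨ W = ⊤)
    (hirrY : ∀ W : Submodule ℂ V', (∀ v ∈ W, Y1 v ∈ W) → (∀ v ∈ W, Y2 v ∈ W) →
      (∀ v ∈ W, Y3 v ∈ W) → W = ⊥ ∨ W = ⊤)
    (x1 x2 x3 h x1' x2' x3' h' : ℂ)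
    (hX1N : X1 ^ N = x1 • (1 : Module.End ℂ V))
    (hX2N : X2 ^ N = x2 • (1 : Module.End ℂ V))
    (hX3N : X3 ^ N = x3 • (1 : Module.End ℂ V))
    (hXH : q⁻¹ • (X1 * X2 * X3) = h • (1 : Module.End ℂ V))
    (hY1N : Y1 ^ N = x1' • (1 : Module.End ℂ V'))
    (hY2N : Y2 ^ N = x2' • (1 : Module.End ℂ V'))
    (hY3N : Y3 ^ N = x3' • (1 : Module.End ℂ V'))
    (hYH : q⁻¹ • (Y1 * Y2 * Y3) = h' • (1 : Module.End ℂ V')) :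
    (∃ L : V ≃ₗ[ℂ] V', (∀ v, L (X1 v) = Y1 (L v)) ∧ (∀ v, L (X2 v) = Y2 (L v)) ∧
      (∀ v, L (X3 v) = Y3 (L v))) ↔
    (x1 = x1' ∧ x2 = x2' ∧ x3 = x3' ∧ h = h') :=
  triangle_irreducible_classification_general hN q hq X1 X2 X3 Y1 Y2 Y3 hu1 hu2 rX12 rY12 hirrX
    hirrY x1 x2 x3 h x1' x2' x3' h' hX1N hX2N hX3N hXH hY1N hY2N hY3N hYH
end

section
/- Let q^2 be a primitive N-th root of unity with q^N = (-1)^{N+1}. For any nonzero complex numbers x1, x2, x3, h with h^N = x1 x2 x3, there exists an irreducible N-dimensional representation rho of the triangle algebra with rho(X_i^N) = x_i Id for i = 1,2,3 and rho(q^{-1}X1X2X3) = h Id. -/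
/-!
`X1` and `X2` are rescaled clock and shift matrices: they `q²`-commute, and they have no common
invariant subspace because the clock has distinct eigenvalues whose eigenlines the shift permutes
cyclically. The third generator is then forced to be `X3 = q h (X1 X2)⁻¹`. It `q²`-commutes with
`X1` and `X2` because `X1 X2` does, and `X1ᴺ X2ᴺ = q^(N(N-1)) (X1 X2)ᴺ` gives
`X3ᴺ = q^(N²) x3 = x3`, as `q^(N²) = ((-1)^(N+1))^N = 1`.
-/

section SkewCommute

variable {K A : Type*} [CommSemiring K] [Semiring A] [Algebra K A]

theorem mul_pow_eq_smul_pow_mul {a c : A} {t : K} (h : a * c = t • (c * a)) (n : ℕ) :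
    a * c ^ n = t ^ n • (c ^ n * a) := by
  induction n with
  | zero => simp
  | succ n ih =>
    calc a * c ^ (n + 1) = t ^ n • (c ^ n * (a * c)) := by
          rw [pow_succ, ← mul_assoc, ih, smul_mul_assoc, mul_assoc]
      _ = t ^ (n + 1) • (c ^ (n + 1) * a) := by
          rw [h, mul_smul_comm, smul_smul, ← pow_succ, ← mul_assoc, ← pow_succ]

theorem pow_mul_pow_eq_smul_mul_pow {a b : A} {t : K} (h : a * b = t • (b * a)) (n : ℕ) :
    a ^ n * b ^ n = t ^ n.choose 2 • (a * b) ^ n := by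
  have ha : a * (a * b) = t • (a * b * a) := by
    conv_lhs => rw [h]
    rw [mul_smul_comm, ← mul_assoc]
  induction n with
  | zero => simp
  | succ n ih =>
    calc a ^ (n + 1) * b ^ (n + 1) = a * (a ^ n * b ^ n) * b := by
          rw [pow_succ', pow_succ, mul_assoc, mul_assoc, mul_assoc]
      _ = t ^ n.choose 2 • (t ^ n • ((a * b) ^ n * (a * b))) := by
          rw [ih, mul_smul_comm, smul_mul_assoc, mul_pow_eq_smul_pow_mul ha, smul_mul_assoc,
            mul_assoc]
      _ = t ^ (n + 1).choose 2 • (a * b) ^ (n + 1) := by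
          rw [smul_smul, ← pow_add, ← pow_succ, Nat.choose_succ_succ', Nat.choose_one_right,
            add_comm]

theorem Units.inv_mul_eq_smul_mul_inv {u : Aˣ} {a : A} {t : K} (h : a * u = t • (u * a)) :
    ↑u⁻¹ * a = t • (a * ↑u⁻¹) := by
  calc ↑u⁻¹ * a = ↑u⁻¹ * (a * u) * ↑u⁻¹ := by simp [mul_assoc]
    _ = t • (a * ↑u⁻¹) := by rw [h, mul_smul_comm, smul_mul_assoc]; simp [← mul_assoc]

theorem Units.mul_inv_eq_smul_inv_mul {u : Aˣ} {a : A} {t : K} (h : u * a = t • (a * u)) :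
    a * ↑u⁻¹ = t • (↑u⁻¹ * a) := by
  calc a * ↑u⁻¹ = ↑u⁻¹ * (u * a) * ↑u⁻¹ := by simp [← mul_assoc]
    _ = t • (↑u⁻¹ * a) := by rw [h, mul_smul_comm, smul_mul_assoc]; simp [mul_assoc]

end SkewCommute

section ThirdGenerator

variable {K A : Type*} [Field K] [Ring A] [Algebra K A]

theorem isUnit_of_pow_eq_smul_one {a : A} {x : K} {n : ℕ} (hn : n ≠ 0) (hx : x ≠ 0)
    (ha : a ^ n = x • 1) : IsUnit a := by
  rw [← isUnit_pow_iff hn, ha, ← Algebra.algebraMap_eq_smul_one]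
  exact (IsUnit.mk0 x hx).map _

theorem exists_skew_commuting_mul_mul_eq_smul_one {a b : A} {t x y : K} (s : K) {n : ℕ}
    (hn : n ≠ 0) (hx : x ≠ 0) (hy : y ≠ 0) (hab : a * b = t • (b * a))
    (ha : a ^ n = x • 1) (hb : b ^ n = y • 1) :
    ∃ c : A, b * c = t • (c * b) ∧ c * a = t • (a * c) ∧ a * b * c = s • 1 ∧
      c ^ n = ((x * y)⁻¹ * (s ^ n * t ^ n.choose 2)) • 1 := by
  obtain ⟨u, hu⟩ :=
    (isUnit_of_pow_eq_smul_one hn hx ha).mul (isUnit_of_pow_eq_smul_one hn hy hb)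
  have hau : a * u = t • (u * a) := by
    conv_lhs => rw [hu, hab]
    rw [hu, mul_smul_comm, ← mul_assoc]
  have hub : u * b = t • (b * u) := by
    conv_lhs => rw [hu, hab]
    rw [hu, smul_mul_assoc, mul_assoc]
  have hpow : t ^ n.choose 2 • ↑(u ^ n) = (x * y) • (1 : A) := by
    rw [Units.val_pow_eq_pow_val, hu, ← pow_mul_pow_eq_smul_mul_pow hab, ha, hb, smul_one_mul,
      smul_smul]
  have hun : ((x * y)⁻¹ * t ^ n.choose 2) • (1 : A) * ↑(u ^ n) = 1 := by
    rw [smul_one_mul, mul_smul, hpow, smul_smul, inv_mul_cancel₀ (mul_ne_zero hx hy), one_smul]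
  refine ⟨s • ↑u⁻¹, ?_, ?_, ?_, ?_⟩
  · rw [mul_smul_comm, smul_mul_assoc, Units.mul_inv_eq_smul_inv_mul hub, smul_comm]
  · rw [mul_smul_comm, smul_mul_assoc, Units.inv_mul_eq_smul_mul_inv hau, smul_comm]
  · rw [mul_smul_comm, ← hu, Units.mul_inv]
  · rw [smul_pow, ← Units.val_pow_eq_pow_val, inv_pow, Units.inv_eq_of_mul_eq_one_left hun,
      smul_smul, mul_left_comm, mul_comm (s ^ n)]

end ThirdGenerator

open Matrix Finset

open scoped Fin.CommRing

section ClockShift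

variable (K : Type*) [CommRing K] (N : ℕ)

def clockMatrix (ζ : K) : Matrix (Fin N) (Fin N) K := diagonal fun i => ζ ^ (i : ℕ)

variable {K N}

theorem clockMatrix_pow_self {ζ : K} (hζ : ζ ^ N = 1) : clockMatrix K N ζ ^ N = 1 := by
  rw [clockMatrix, diagonal_pow, ← diagonal_one]
  congr
  ext i
  rw [Pi.pow_apply, ← pow_mul, mul_comm, pow_mul, hζ, one_pow]

variable (K N) [NeZero N]

def shiftMatrix : Matrix (Fin N) (Fin N) K := permMatrixHom (Equiv.addRight 1)

variable {K N}

theorem shiftMatrix_mulVec (v : Fin N → K) : shiftMatrix K N *ᵥ v = fun j => v (j - 1) := by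
  ext j
  simp [shiftMatrix, permMatrix_mulVec, sub_eq_add_neg]

theorem shiftMatrix_pow_self : shiftMatrix K N ^ N = 1 := by
  rw [shiftMatrix, ← map_pow, ← map_one (permMatrixHom (R := K))]
  congr
  ext i
  simp

theorem diagonal_mul_shiftMatrix (d : Fin N → K) :
    diagonal d * shiftMatrix K N = shiftMatrix K N * diagonal fun i => d (i + 1) := by
  refine toLin'.injective (LinearMap.ext fun v => ?_)
  ext j
  simp only [toLin'_apply, ← mulVec_mulVec, shiftMatrix_mulVec, mulVec_diagonal, sub_add_cancel]

theorem clockMatrix_mul_shiftMatrix {ζ : K} (hζ : ζ ^ N = 1) :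
    clockMatrix K N ζ * shiftMatrix K N = ζ • (shiftMatrix K N * clockMatrix K N ζ) := by
  have hsucc (i : Fin N) : ζ ^ ((i + 1 : Fin N) : ℕ) = ζ * ζ ^ (i : ℕ) := by
    rw [Fin.val_add, ← pow_eq_pow_mod _ hζ, pow_add, Fin.val_one', ← pow_eq_pow_mod _ hζ,
      pow_one, mul_comm]
  rw [clockMatrix, diagonal_mul_shiftMatrix, ← mul_smul_comm, ← diagonal_smul]
  simp only [hsucc]
  rfl

end ClockShift

section Irreducibility

variable {K : Type*} [Field K]

theorem Submodule.mulVec_mem_of_smul_mulVec_mem {n : Type*} [Fintype n] {W : Submodule K (n → K)}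
    {A : Matrix n n K} {c : K} (hc : c ≠ 0) (hW : ∀ v ∈ W, (c • A) *ᵥ v ∈ W) :
    ∀ v ∈ W, A *ᵥ v ∈ W := fun v hv => by
  simpa [smul_mulVec, smul_smul, hc] using W.smul_mem c⁻¹ (hW v hv)

theorem Submodule.single_mem_of_diagonal_mulVec_mem {n : Type*} [Fintype n] [DecidableEq n]
    {d : n → K} (hd : Function.Injective d) {W : Submodule K (n → K)}
    (hW : ∀ v ∈ W, diagonal d *ᵥ v ∈ W) {v : n → K} (hv : v ∈ W) {i : n}
    (hi : v i ≠ 0) :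
    Pi.single i 1 ∈ W := by
  -- `∏ k ∈ S, (diagonal d - d k)` scales the `j`-th coordinate by `∏ k ∈ S, (d j - d k)`
  have hprod (S : Finset n) : (fun j => (∏ k ∈ S, (d j - d k)) * v j) ∈ W := by
    induction S using Finset.induction_on with
    | empty => simpa using hv
    | insert k S hk ih =>
      convert W.sub_mem (hW _ ih) (W.smul_mem (d k) ih) using 1
      ext j
      simp only [prod_insert hk, Pi.sub_apply, mulVec_diagonal, Pi.smul_apply, smul_eq_mul]
      ring
  set c := ∏ k ∈ univ.erase i, (d i - d k)
  have hc : c ≠ 0 :=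
    prod_ne_zero_iff.2 fun k hk => sub_ne_zero.2 (hd.ne (ne_of_mem_erase hk).symm)
  have hsingle :
      (fun j => (∏ k ∈ univ.erase i, (d j - d k)) * v j) = (c * v i) • Pi.single i 1 := by
    ext j
    by_cases hj : j = i
    · subst hj; simp [c]
    · have hj' : j ∈ univ.erase i := mem_erase.2 ⟨hj, mem_univ j⟩
      simp [hj, prod_eq_zero (f := fun k => d j - d k) hj' (sub_self _)]
  have := W.smul_mem (c * v i)⁻¹ (hprod (univ.erase i))
  rwa [hsingle, smul_smul, inv_mul_cancel₀ (mul_ne_zero hc hi), one_smul] at this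

variable {N : ℕ} [NeZero N]

theorem Submodule.eq_top_of_single_mem_of_shiftMatrix_mulVec_mem {W : Submodule K (Fin N → K)}
    (hW : ∀ v ∈ W, shiftMatrix K N *ᵥ v ∈ W) {i : Fin N} (hi : Pi.single i 1 ∈ W) :
    W = ⊤ := by
  have hstep (j : Fin N) (hj : Pi.single j (1 : K) ∈ W) : Pi.single (j + 1) (1 : K) ∈ W := by
    convert hW _ hj using 1
    rw [shiftMatrix_mulVec]
    ext k
    simp [Pi.single_apply, sub_eq_iff_eq_add]
  have hiter (m : ℕ) : Pi.single ((· + 1)^[m] i) (1 : K) ∈ W := by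
    induction m with
    | zero => exact hi
    | succ m ih => rw [Function.iterate_succ_apply']; exact hstep _ ih
  rw [eq_top_iff, ← (Pi.basisFun K (Fin N)).span_eq, Submodule.span_le]
  rintro _ ⟨j, rfl⟩
  simpa [add_right_iterate] using hiter (j - i).val

theorem Submodule.eq_bot_or_eq_top_of_clockMatrix_shiftMatrix_mulVec_mem {ζ : K}
    (hζ : IsPrimitiveRoot ζ N) {W : Submodule K (Fin N → K)}
    (hW₁ : ∀ v ∈ W, clockMatrix K N ζ *ᵥ v ∈ W)
    (hW₂ : ∀ v ∈ W, shiftMatrix K N *ᵥ v ∈ W) :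
    W = ⊥ ∨ W = ⊤ := by
  refine or_iff_not_imp_left.2 fun hW => ?_
  obtain ⟨v, hv, hv0⟩ := W.ne_bot_iff.1 hW
  obtain ⟨i, hi⟩ := Function.ne_iff.1 hv0
  have hinj : Function.Injective fun i : Fin N => ζ ^ (i : ℕ) :=
    fun i j h => Fin.ext (hζ.pow_inj i.isLt j.isLt h)
  exact W.eq_top_of_single_mem_of_shiftMatrix_mulVec_mem hW₂
    (W.single_mem_of_diagonal_mulVec_mem hinj hW₁ hv hi)

end Irreducibility

theorem pow_mul_sq_pow_choose_two_eq_one {R : Type*} [Monoid R] [HasDistribNeg R] {q : R}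
    {N : ℕ} (hq : q ^ N = (-1) ^ (N + 1)) : q ^ N * (q ^ 2) ^ N.choose 2 = 1 := by
  have hexp : N + 2 * N.choose 2 = N * N := by
    rw [Nat.choose_two_right, Nat.mul_div_cancel' (Nat.even_mul_pred_self N).two_dvd]
    cases N <;> simp [Nat.mul_succ]; ring
  rw [← pow_mul, ← pow_add, hexp, pow_mul, hq, ← pow_mul, mul_comm,
    (Nat.even_mul_succ_self N).neg_one_pow]

theorem triangle_representation_exists_general {N : ℕ} (hN : 0 < N) (q : ℂ)
    (hq : IsPrimitiveRoot (q ^ 2) N) (hqN : q ^ N = (-1 : ℂ) ^ (N + 1))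
    (x1 x2 x3 h : ℂ) (hx1 : x1 ≠ 0) (hx2 : x2 ≠ 0) (hx3 : x3 ≠ 0)
    (hprod : h ^ N = x1 * x2 * x3) :
    ∃ X1 X2 X3 : Matrix (Fin N) (Fin N) ℂ,
      IsUnit X1 ∧ IsUnit X2 ∧ IsUnit X3 ∧
      X1 * X2 = (q ^ 2) • (X2 * X1) ∧
      X2 * X3 = (q ^ 2) • (X3 * X2) ∧
      X3 * X1 = (q ^ 2) • (X1 * X3) ∧
      (∀ W : Submodule ℂ (Fin N → ℂ),
        (∀ v ∈ W, X1.mulVec v ∈ W) → (∀ v ∈ W, X2.mulVec v ∈ W) →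
        (∀ v ∈ W, X3.mulVec v ∈ W) → W = ⊥ ∨ W = ⊤) ∧
      X1 ^ N = x1 • (1 : Matrix (Fin N) (Fin N) ℂ) ∧
      X2 ^ N = x2 • (1 : Matrix (Fin N) (Fin N) ℂ) ∧
      X3 ^ N = x3 • (1 : Matrix (Fin N) (Fin N) ℂ) ∧
      q⁻¹ • (X1 * X2 * X3) = h • (1 : Matrix (Fin N) (Fin N) ℂ) := by
  have : NeZero N := ⟨hN.ne'⟩
  obtain ⟨y1, rfl⟩ := IsAlgClosed.exists_pow_nat_eq x1 hN
  obtain ⟨y2, rfl⟩ := IsAlgClosed.exists_pow_nat_eq x2 hN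
  have hq0 : q ≠ 0 := ne_zero_pow two_ne_zero (hq.ne_zero hN.ne')
  set X1 := y1 • clockMatrix ℂ N (q ^ 2)
  set X2 := y2 • shiftMatrix ℂ N
  have h12 : X1 * X2 = q ^ 2 • (X2 * X1) := by
    rw [smul_mul_smul_comm, clockMatrix_mul_shiftMatrix hq.pow_eq_one, smul_mul_smul_comm,
      smul_comm, mul_comm y1]
  have hX1 : X1 ^ N = y1 ^ N • 1 := by rw [smul_pow, clockMatrix_pow_self hq.pow_eq_one]
  have hX2 : X2 ^ N = y2 ^ N • 1 := by rw [smul_pow, shiftMatrix_pow_self]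
  obtain ⟨X3, h23, h31, h123, hX3⟩ :=
    exists_skew_commuting_mul_mul_eq_smul_one (q * h) hN.ne' hx1 hx2 h12 hX1 hX2
  have hx3' : (y1 ^ N * y2 ^ N)⁻¹ * ((q * h) ^ N * (q ^ 2) ^ N.choose 2) = x3 := by
    rw [mul_pow, mul_right_comm, pow_mul_sq_pow_choose_two_eq_one hqN, one_mul, hprod]
    field_simp
  rw [hx3'] at hX3
  refine ⟨X1, X2, X3, isUnit_of_pow_eq_smul_one hN.ne' hx1 hX1,
    isUnit_of_pow_eq_smul_one hN.ne' hx2 hX2, isUnit_of_pow_eq_smul_one hN.ne' hx3 hX3,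
    h12, h23, h31, fun W hW₁ hW₂ _ => ?_, hX1, hX2, hX3, ?_⟩
  · exact W.eq_bot_or_eq_top_of_clockMatrix_shiftMatrix_mulVec_mem hq
      (W.mulVec_mem_of_smul_mulVec_mem (ne_zero_pow hN.ne' hx1) hW₁)
      (W.mulVec_mem_of_smul_mulVec_mem (ne_zero_pow hN.ne' hx2) hW₂)
  · rw [h123, smul_smul, inv_mul_cancel_left₀ hq0]

/-- For any nonzero `x1, x2, x3, h` with `h^N = x1 x2 x3`, there exists an irreducible
`N`-dimensional representation of the triangle algebra with `X_i^N = x_i Id` and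
`q⁻¹ X1 X2 X3 = h Id`. -/
theorem triangle_representation_exists {N : ℕ} (hN : 0 < N) (q : ℂ)
    (hq : IsPrimitiveRoot (q ^ 2) N) (hqN : q ^ N = (-1 : ℂ) ^ (N + 1))
    (x1 x2 x3 h : ℂ) (hx1 : x1 ≠ 0) (hx2 : x2 ≠ 0) (hx3 : x3 ≠ 0) (hh : h ≠ 0)
    (hprod : h ^ N = x1 * x2 * x3) :
    ∃ X1 X2 X3 : Matrix (Fin N) (Fin N) ℂ,
      IsUnit X1 ∧ IsUnit X2 ∧ IsUnit X3 ∧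
      X1 * X2 = (q ^ 2) • (X2 * X1) ∧
      X2 * X3 = (q ^ 2) • (X3 * X2) ∧
      X3 * X1 = (q ^ 2) • (X1 * X3) ∧
      (∀ W : Submodule ℂ (Fin N → ℂ),
        (∀ v ∈ W, X1.mulVec v ∈ W) → (∀ v ∈ W, X2.mulVec v ∈ W) →
        (∀ v ∈ W, X3.mulVec v ∈ W) → W = ⊥ ∨ W = ⊤) ∧
      X1 ^ N = x1 • (1 : Matrix (Fin N) (Fin N) ℂ) ∧
      X2 ^ N = x2 • (1 : Matrix (Fin N) (Fin N) ℂ) ∧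
      X3 ^ N = x3 • (1 : Matrix (Fin N) (Fin N) ℂ) ∧
      q⁻¹ • (X1 * X2 * X3) = h • (1 : Matrix (Fin N) (Fin N) ℂ) :=
  triangle_representation_exists_general hN q hq hqN x1 x2 x3 h hx1 hx2 hx3 hprod
end

section
/- Let A, B be invertible endomorphisms of a finite-dimensional complex vector space with AB = q^2 BA, where q^2 is a primitive N-th root of unity and q^N = (-1)^{N+1}, and with A^N = x Id, B^N = y Id for scalars x, y. Then: (A^{-1})^N = x^{-1} Id; ((1+qA)B)^N = (1+x) y Id; and ((1+qA^{-1})^{-1} B)^N = (1+x^{-1})^{-1} y Id, the latter provided 1 + x^{-1} ≠ 0 (which guarantees 1 + qA^{-1} is invertible). -/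
/-!
A polynomial `p(A)` satisfies `p(A) B = B p(ωA)` when `AB = ωBA`, so
`(p(A) B)^N = B^N ∏_{j=1}^N p(ω^j A)`, a product of commuting factors computed in `ℂ[X]`.
For `p = 1 + qX` and `ω = q²` a primitive `N`-th root of unity this product is
`∏_j (1 + q ω^j A) = 1 + A^N`, which is where `q^N = (-1)^(N+1)` enters; this gives the
second identity. The pair `(A⁻¹, B⁻¹)` satisfies the same commutation relation, so
`((1 + qA⁻¹) B⁻¹)^N = (1 + x⁻¹) y⁻¹`; inverting, and conjugating by `B`, gives the third.
-/

open Polynomial Finset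

namespace Ring

theorem inverse_mul_inverse_eq_smul {k R : Type*} [CommSemiring k] [Semiring R] [Algebra k R]
    {a b : R} {c : k} (ha : IsUnit a) (hb : IsUnit b) (h : a * b = c • (b * a)) :
    inverse a * inverse b = c • (inverse b * inverse a) := by
  obtain ⟨a, rfl⟩ := ha
  obtain ⟨b, rfl⟩ := hb
  simp only [inverse_unit]
  calc (↑a⁻¹ * ↑b⁻¹ : R) = ↑b⁻¹ * ↑a⁻¹ * (↑a * ↑b) * (↑a⁻¹ * ↑b⁻¹) := by simp [mul_assoc]
    _ = c • (↑b⁻¹ * ↑a⁻¹) := by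
        rw [h, mul_smul_comm, smul_mul_assoc]
        simp [mul_assoc]

variable {k R : Type*} [Field k] [Semiring R] [Algebra k R]

theorem inverse_smul_one (x : k) : inverse (x • (1 : R)) = x⁻¹ • 1 := by
  rcases eq_or_ne x 0 with rfl | hx
  · simp
  · exact inverse_unit ⟨x • 1, x⁻¹ • 1, by simp [smul_smul, hx], by simp [smul_smul, hx]⟩

theorem inverse_mul_pow_of_mul_inverse_pow {u b : R} (hu : IsUnit u) (hb : IsUnit b) {s : k}
    {n : ℕ} (h : (u * inverse b) ^ n = s • 1) :
    (inverse u * b) ^ n = s⁻¹ • 1 := by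
  obtain ⟨u, rfl⟩ := hu
  obtain ⟨b, rfl⟩ := hb
  rw [inverse_unit] at h
  have hconj : (((b⁻¹ * u) ^ n : Rˣ) : R) = s • 1 := by
    rw [Units.val_pow_eq_pow_val, Units.val_mul,
      show (↑b⁻¹ * ↑u : R) = ↑b⁻¹ * (↑u * ↑b⁻¹) * ↑b by simp [mul_assoc], Units.conj_pow', h,
      mul_smul_comm, mul_one, smul_mul_assoc, Units.inv_mul]
  rw [inverse_unit, ← inverse_smul_one, ← hconj, inverse_unit, ← Units.val_mul,
    ← Units.val_pow_eq_pow_val, ← inv_pow, mul_inv_rev, inv_inv]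

end Ring

section TwistedCommutation

variable {k R : Type*} [CommSemiring k] [Semiring R] [Algebra k R] {a b : R} {c : k}

theorem pow_mul_eq_smul_mul_pow (h : a * b = c • (b * a)) (n : ℕ) :
    a ^ n * b = c ^ n • (b * a ^ n) := by
  induction n with
  | zero => simp
  | succ n ih =>
    rw [pow_succ, mul_assoc, h, mul_smul_comm, ← mul_assoc, ih, smul_mul_assoc, smul_smul,
      mul_assoc, ← pow_succ, ← pow_succ']

theorem aeval_mul_eq_mul_aeval_comp (h : a * b = c • (b * a)) (p : k[X]) :
    aeval a p * b = b * aeval a (p.comp (C c * X)) := by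
  induction p using Polynomial.induction_on' with
  | add p q hp hq => simp only [map_add, add_mul, mul_add, add_comp, hp, hq]
  | monomial n r =>
    rw [aeval_comp, map_mul, aeval_C, aeval_X, ← Algebra.smul_def, aeval_monomial,
      aeval_monomial, _root_.smul_pow, mul_assoc, pow_mul_eq_smul_mul_pow h]
    simp only [← Algebra.smul_def, mul_smul_comm]

theorem aeval_mul_pow (h : a * b = c • (b * a)) (p : k[X]) (n : ℕ) :
    (aeval a p * b) ^ n = b ^ n * aeval a (∏ j ∈ range n, p.comp (C (c ^ (j + 1)) * X)) := by
  induction n with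
  | zero => simp
  | succ n ih =>
    have hshift : (∏ j ∈ range n, p.comp (C (c ^ (j + 1)) * X)).comp (C c * X) =
        ∏ j ∈ range n, p.comp (C (c ^ (j + 1 + 1)) * X) := by
      simp only [Polynomial.prod_comp, comp_assoc, mul_comp, C_comp, X_comp, ← mul_assoc,
        ← C_mul, ← pow_succ]
    rw [pow_succ, ih, mul_assoc, ← mul_assoc (aeval a _), ← map_mul,
      aeval_mul_eq_mul_aeval_comp h, ← mul_assoc, ← pow_succ, mul_comp, hshift,
      prod_range_succ' _ n, pow_one]

end TwistedCommutation

theorem IsPrimitiveRoot.prod_one_sub_C_pow_mul_X {K : Type*} [CommRing K] [IsDomain K] {ω : K}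
    {N : ℕ} (hω : IsPrimitiveRoot ω N) (hN : 0 < N) :
    ∏ j ∈ range N, (1 - C (ω ^ j) * X) = 1 - X ^ N := by
  have h := X_pow_sub_C_eq_prod (hω.map_of_injective C_injective) hN (α := (X : K[X])) rfl
  simpa [eval_prod, eq_comm] using congrArg (eval 1) h

theorem prod_one_add_C_mul_X_comp {K : Type*} [CommRing K] [IsDomain K] {q : K} {N : ℕ}
    (hN : 0 < N) (hq : IsPrimitiveRoot (q ^ 2) N) (hqN : q ^ N = (-1) ^ (N + 1)) :
    ∏ j ∈ range N, (1 + C q * X).comp (C ((q ^ 2) ^ (j + 1)) * X) = 1 + X ^ N := by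
  have hfactor (j : ℕ) : (1 + C q * X).comp (C ((q ^ 2) ^ (j + 1)) * X) =
      (1 - C ((q ^ 2) ^ j) * X).comp (C (-(q * q ^ 2)) * X) := by
    simp only [add_comp, sub_comp, one_comp, mul_comp, C_comp, X_comp, ← mul_assoc, ← C_mul]
    rw [sub_eq_add_neg, ← neg_mul, ← C_neg]
    ring_nf
  have hsign : (-(q * q ^ 2)) ^ N = -1 := by
    rw [neg_pow, mul_pow, hqN, hq.pow_eq_one, mul_one, ← pow_add, ← add_assoc, ← two_mul,
      pow_succ, pow_mul]
    simp
  rw [prod_congr rfl fun j _ => hfactor j, ← Polynomial.prod_comp,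
    hq.prod_one_sub_C_pow_mul_X hN, sub_comp, one_comp, pow_comp, X_comp, mul_pow, ← C_pow,
    hsign]
  simp

theorem pow_one_add_smul_mul {K R : Type*} [CommRing K] [IsDomain K] [Semiring R] [Algebra K R]
    {q : K} {N : ℕ} (hN : 0 < N) (hq : IsPrimitiveRoot (q ^ 2) N)
    (hqN : q ^ N = (-1) ^ (N + 1)) {a b : R} (h : a * b = q ^ 2 • (b * a)) :
    ((1 + q • a) * b) ^ N = b ^ N * (1 + a ^ N) := by
  have hpoly : 1 + q • a = aeval a (1 + C q * X) := by simp [Algebra.smul_def]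
  rw [hpoly, aeval_mul_pow h, prod_one_add_C_mul_X_comp hN hq hqN, map_add, map_one, map_pow,
    aeval_X]

theorem diagonal_exchange_identities_general {N : ℕ} (hN : 0 < N) (q : ℂ)
    (hq : IsPrimitiveRoot (q ^ 2) N) (hqN : q ^ N = (-1 : ℂ) ^ (N + 1))
    {V : Type*} [AddCommGroup V] [Module ℂ V]
    (A B : Module.End ℂ V) (hA : IsUnit A) (hB : IsUnit B)
    (hAB : A * B = (q ^ 2) • (B * A)) (x y : ℂ)
    (hAN : A ^ N = x • (1 : Module.End ℂ V))
    (hBN : B ^ N = y • (1 : Module.End ℂ V)) :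
    (Ring.inverse A) ^ N = x⁻¹ • (1 : Module.End ℂ V) ∧
    ((1 + q • A) * B) ^ N = ((1 + x) * y) • (1 : Module.End ℂ V) ∧
    (1 + x⁻¹ ≠ 0 →
      IsUnit (1 + q • Ring.inverse A) ∧
      (Ring.inverse (1 + q • Ring.inverse A) * B) ^ N
        = ((1 + x⁻¹)⁻¹ * y) • (1 : Module.End ℂ V)) := by
  have hinvA : Ring.inverse A ^ N = x⁻¹ • 1 := by
    rw [Ring.inverse_pow, hAN, Ring.inverse_smul_one]
  refine ⟨hinvA, ?_, fun hx => ?_⟩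
  · rw [pow_one_add_smul_mul hN hq hqN hAB, hAN, hBN, smul_mul_assoc, one_mul, mul_comm,
      mul_smul, add_smul, one_smul]
  set u := 1 + q • Ring.inverse A
  have huB : (u * Ring.inverse B) ^ N = (1 + x⁻¹) • Ring.inverse B ^ N := by
    rw [pow_one_add_smul_mul hN hq hqN (Ring.inverse_mul_inverse_eq_smul hA hB hAB), hinvA,
      mul_add, mul_one, mul_smul_comm, mul_one, add_smul, one_smul]
  have hu : IsUnit u := by
    have hpow : IsUnit ((u * Ring.inverse B) ^ N) :=
      huB ▸ (hB.ringInverse.pow N).smul (Units.mk0 _ hx)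
    exact hB.ringInverse.mul_right_iff.mp ((isUnit_pow_iff hN.ne').mp hpow)
  refine ⟨hu, ?_⟩
  rw [Ring.inverse_pow, hBN, Ring.inverse_smul_one, smul_smul] at huB
  rw [Ring.inverse_mul_pow_of_mul_inverse_pow hu hB huB, mul_inv, inv_inv]

/-- Diagonal-exchange identities for a quantum-plane pair at a root of unity:
`(A⁻¹)^N = x⁻¹ Id`, `((1+qA)B)^N = (1+x) y Id`, and, when `1 + x⁻¹ ≠ 0`,
`1 + q A⁻¹` is invertible and `((1+qA⁻¹)⁻¹ B)^N = (1+x⁻¹)⁻¹ y Id`. -/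
theorem diagonal_exchange_identities {N : ℕ} (hN : 0 < N) (q : ℂ)
    (hq : IsPrimitiveRoot (q ^ 2) N) (hqN : q ^ N = (-1 : ℂ) ^ (N + 1))
    {V : Type*} [AddCommGroup V] [Module ℂ V] [FiniteDimensional ℂ V]
    (A B : Module.End ℂ V) (hA : IsUnit A) (hB : IsUnit B)
    (hAB : A * B = (q ^ 2) • (B * A)) (x y : ℂ)
    (hAN : A ^ N = x • (1 : Module.End ℂ V))
    (hBN : B ^ N = y • (1 : Module.End ℂ V)) :
    (Ring.inverse A) ^ N = x⁻¹ • (1 : Module.End ℂ V) ∧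
    ((1 + q • A) * B) ^ N = ((1 + x) * y) • (1 : Module.End ℂ V) ∧
    (1 + x⁻¹ ≠ 0 →
      IsUnit (1 + q • Ring.inverse A) ∧
      (Ring.inverse (1 + q • Ring.inverse A) * B) ^ N
        = ((1 + x⁻¹)⁻¹ * y) • (1 : Module.End ℂ V)) :=
  diagonal_exchange_identities_general hN q hq hqN A B hA hB hAB x y hAN hBN
end

section
/- Let q^2 be a primitive N-th root of unity, and let A, B be invertible endomorphisms of a finite-dimensional complex vector space V with AB = q^2 BA. Then N divides dim V. -/
theorem LinearMap.pow_finrank_eq_one_of_mul_eq_smul_mul {R M : Type*} [CommRing R]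
    [AddCommGroup M] [Module R M] [Module.Free R M] {A B : Module.End R M} (hA : IsUnit A)
    (hB : IsUnit B) {c : R} (hAB : A * B = c • (B * A)) :
    c ^ Module.finrank R M = 1 := by
  have hunit : IsUnit (LinearMap.det (A * B)) := (hA.mul hB).map LinearMap.det
  refine (hunit.mul_right_cancel ?_).symm
  calc 1 * LinearMap.det (A * B) = LinearMap.det (c • (B * A)) := by rw [one_mul, hAB]
    _ = c ^ Module.finrank R M * LinearMap.det (A * B) := by
      rw [LinearMap.det_smul, map_mul, map_mul, mul_comm (LinearMap.det B)]

theorem quantum_plane_dimension_divisible_general {N : ℕ} (q : ℂ)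
    (hq : IsPrimitiveRoot (q ^ 2) N)
    {V : Type*} [AddCommGroup V] [Module ℂ V]
    (A B : Module.End ℂ V) (hA : IsUnit A) (hB : IsUnit B)
    (hAB : A * B = (q ^ 2) • (B * A)) :
    N ∣ Module.finrank ℂ V :=
  hq.dvd_of_pow_eq_one _ (LinearMap.pow_finrank_eq_one_of_mul_eq_smul_mul hA hB hAB)

/-- If `q^2` is a primitive `N`-th root of unity and `A, B` are invertible endomorphisms
of a finite-dimensional complex vector space with `A B = q^2 B A`, then `N` divides
the dimension. -/
theorem quantum_plane_dimension_divisible {N : ℕ} (hN : 0 < N) (q : ℂ)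
    (hq : IsPrimitiveRoot (q ^ 2) N)
    {V : Type*} [AddCommGroup V] [Module ℂ V] [FiniteDimensional ℂ V]
    (A B : Module.End ℂ V) (hA : IsUnit A) (hB : IsUnit B)
    (hAB : A * B = (q ^ 2) • (B * A)) :
    N ∣ Module.finrank ℂ V :=
  quantum_plane_dimension_divisible_general q hq A B hA hB hAB
end

section
/- Let q^2 be a primitive N-th root of unity, q^N = (-1)^{N+1}, and let rho, rho' be two irreducible representations of the triangle algebra on C^N given by standard forms with parameters (y1, y2, y3) and (y1', y2', y3') respectively (i.e., rho(X1)e_i = y1 q^{2i} e_i, rho(X2)e_i = y2 e_{i+1}, rho(X3)e_i = y3 q^{1-2i} e_{i-1}, and similarly for rho'). Then rho and rho' are isomorphic if and only if y1'^N = y1^N, y2'^N = y2^N, y3'^N = y3^N and y1'y2'y3' = y1y2y3. -/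
private lemma pow_mod_eq {ζ : ℂ} {N : ℕ} (h : ζ ^ N = 1) (a : ℕ) : ζ ^ (a % N) = ζ ^ a :=
  (pow_eq_pow_mod a h).symm

/-- generic product against `triX2` on the right -/
private lemma mul_triX2 (N : ℕ) [NeZero N] (y2 : ℂ) (M : Matrix (Fin N) (Fin N) ℂ)
    (j i : Fin N) : (M * triX2 N y2) j i = M j (i + 1) * y2 := by
  rw [Matrix.mul_apply]
  rw [Finset.sum_eq_single (i + 1)]
  · simp [triX2]
  · intro c _ hc
    simp [triX2, hc]
  · simp

private lemma triX2_mul (N : ℕ) [NeZero N] (y2 : ℂ) (M : Matrix (Fin N) (Fin N) ℂ)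
    (j i : Fin N) : (triX2 N y2 * M) j i = y2 * M (j - 1) i := by
  rw [Matrix.mul_apply]
  rw [Finset.sum_eq_single (j - 1)]
  · simp [triX2, sub_add_cancel]
  · intro c _ hc
    have : j ≠ c + 1 := by
      intro h; apply hc; rw [h]; exact (add_sub_cancel_right c 1).symm
    simp [triX2, this]
  · simp

private lemma mul_triX3 (N : ℕ) [NeZero N] (q y3 : ℂ) (M : Matrix (Fin N) (Fin N) ℂ)
    (j i : Fin N) :
    (M * triX3 N q y3) j i = M j (i - 1) * (y3 * q ^ ((1 : ℤ) - 2 * ((i : ℕ) : ℤ))) := by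
  rw [Matrix.mul_apply]
  rw [Finset.sum_eq_single (i - 1)]
  · simp [triX3]
  · intro c _ hc
    simp [triX3, hc]
  · simp

private lemma triX3_mul (N : ℕ) [NeZero N] (q y3 : ℂ) (M : Matrix (Fin N) (Fin N) ℂ)
    (j i : Fin N) :
    (triX3 N q y3 * M) j i
      = (y3 * q ^ ((1 : ℤ) - 2 * (((j + 1 : Fin N) : ℕ) : ℤ))) * M (j + 1) i := by
  rw [Matrix.mul_apply]
  rw [Finset.sum_eq_single (j + 1)]
  · simp [triX3, add_sub_cancel_right]
  · intro c _ hc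
    have : j ≠ c - 1 := by
      intro h; apply hc; rw [h]; exact (sub_add_cancel c 1).symm
    simp [triX3, this]
  · simp

/-- `X1 X2 X3 = q y1 y2 y3 • 1`. -/
private lemma triH (N : ℕ) [NeZero N] (q : ℂ) (hq0 : q ≠ 0) (hu : (q ^ 2) ^ N = 1)
    (a b c : ℂ) :
    triX1 N q a * triX2 N b * triX3 N q c = (q * (a * b * c)) • (1 : Matrix (Fin N) (Fin N) ℂ) := by
  ext j i
  rw [mul_triX3, mul_triX2]
  have h1 : triX1 N q a j ((i - 1) + 1) = if j = i then a * q ^ (2 * (j : ℕ)) else 0 := by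
    rw [sub_add_cancel]
    simp [triX1, Matrix.diagonal_apply]
  rw [h1]
  by_cases h : j = i
  · subst h
    simp only [if_pos rfl, Matrix.smul_apply, Matrix.one_apply_eq, smul_eq_mul, mul_one]
    have hqq : (q : ℂ) ^ (2 * (j : ℕ)) * q ^ ((1 : ℤ) - 2 * ((j : ℕ) : ℤ)) = q := by
      rw [← zpow_natCast q (2 * (j : ℕ)), ← zpow_add₀ hq0]
      have : ((2 * (j : ℕ) : ℕ) : ℤ) + ((1 : ℤ) - 2 * ((j : ℕ) : ℤ)) = 1 := by push_cast; ring
      rw [this, zpow_one]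
    calc a * q ^ (2 * (j : ℕ)) * b * (c * q ^ ((1:ℤ) - 2 * ((j : ℕ) : ℤ)))
        = (q ^ (2 * (j : ℕ)) * q ^ ((1:ℤ) - 2 * ((j : ℕ) : ℤ))) * (a * b * c) := by ring
      _ = q * (a * b * c) := by rw [hqq]
  · simp [h, Matrix.one_apply_ne h]

/-- Two standard-form representations of the triangle algebra, with parameters
`(y1, y2, y3)` and `(y1', y2', y3')`, are isomorphic if and only if
`y_i'^N = y_i^N` for `i = 1, 2, 3` and `y1' y2' y3' = y1 y2 y3`. -/
theorem triangle_standard_iso_iff (N : ℕ) [NeZero N] (q : ℂ)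
    (hq : IsPrimitiveRoot (q ^ 2) N) (hqN : q ^ N = (-1 : ℂ) ^ (N + 1))
    (y1 y2 y3 y1' y2' y3' : ℂ)
    (hy1 : y1 ≠ 0) (hy2 : y2 ≠ 0) (hy3 : y3 ≠ 0)
    (hy1' : y1' ≠ 0) (hy2' : y2' ≠ 0) (hy3' : y3' ≠ 0) :
    (∃ P : Matrix (Fin N) (Fin N) ℂ, IsUnit P ∧
      P * triX1 N q y1 = triX1 N q y1' * P ∧
      P * triX2 N y2 = triX2 N y2' * P ∧
      P * triX3 N q y3 = triX3 N q y3' * P) ↔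
    (y1' ^ N = y1 ^ N ∧ y2' ^ N = y2 ^ N ∧ y3' ^ N = y3 ^ N ∧
      y1' * y2' * y3' = y1 * y2 * y3) := by
  have hN : 0 < N := Nat.pos_of_ne_zero (NeZero.ne N)
  have hq0 : q ≠ 0 := by
    intro h
    rw [h, zero_pow (NeZero.ne N)] at hqN
    exact pow_ne_zero (N + 1) (by norm_num : (-1:ℂ) ≠ 0) hqN.symm
  have hu1 : (q ^ 2) ^ N = 1 := hq.pow_eq_one
  constructor
  · rintro ⟨P, hPu, h1, h2, h3⟩
    have hdP : P.det ≠ 0 := ((Matrix.isUnit_iff_isUnit_det P).mp hPu).ne_zero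
    -- determinants of the generators
    have detX1 : ∀ y : ℂ, (triX1 N q y).det = y ^ N * ∏ i : Fin N, q ^ (2 * (i : ℕ)) := by
      intro y
      rw [triX1, Matrix.det_diagonal, Finset.prod_mul_distrib, Finset.prod_const,
        Finset.card_univ, Fintype.card_fin]
    have detX2 : ∀ y : ℂ,
        (triX2 N y).det = ((Equiv.Perm.sign (Equiv.subRight (1 : Fin N))) : ℂ) * y ^ N := by
      intro y
      have : triX2 N y
          = Equiv.Perm.permMatrix ℂ (Equiv.subRight (1 : Fin N)) * Matrix.diagonal (fun _ : Fin N => y) := by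
        ext j i
        rw [Matrix.mul_diagonal]
        simp only [triX2, Matrix.of_apply, Equiv.Perm.permMatrix, PEquiv.toMatrix_apply,
          Equiv.toPEquiv_apply, Option.mem_def, Option.some.injEq, Equiv.subRight_apply]
        by_cases h : j = i + 1
        · subst h; simp [add_sub_cancel_right]
        · rw [if_neg h, if_neg, zero_mul]
          intro h'; exact h (by rw [← h', sub_add_cancel])
      rw [this, Matrix.det_mul, Matrix.det_permutation, Matrix.det_diagonal,
        Finset.prod_const, Finset.card_univ, Fintype.card_fin]
    have detX3 : ∀ y : ℂ,
        (triX3 N q y).det = ((Equiv.Perm.sign (Equiv.addRight (1 : Fin N))) : ℂ)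
          * (y ^ N * ∏ i : Fin N, q ^ ((1:ℤ) - 2 * ((i : ℕ) : ℤ))) := by
      intro y
      have : triX3 N q y = Equiv.Perm.permMatrix ℂ (Equiv.addRight (1 : Fin N))
          * Matrix.diagonal (fun i : Fin N => y * q ^ ((1:ℤ) - 2 * ((i : ℕ) : ℤ))) := by
        ext j i
        rw [Matrix.mul_diagonal]
        simp only [triX3, Matrix.of_apply, Equiv.Perm.permMatrix, PEquiv.toMatrix_apply,
          Equiv.toPEquiv_apply, Option.mem_def, Option.some.injEq, Equiv.coe_addRight]
        by_cases h : j = i - 1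
        · subst h; simp [sub_add_cancel]
        · rw [if_neg h, if_neg, zero_mul]
          intro h'; exact h (by rw [← h', add_sub_cancel_right])
      rw [this, Matrix.det_mul, Matrix.det_permutation, Matrix.det_diagonal,
        Finset.prod_mul_distrib, Finset.prod_const, Finset.card_univ, Fintype.card_fin]
    have key : ∀ A B : Matrix (Fin N) (Fin N) ℂ, P * A = B * P → A.det = B.det := by
      intro A B h
      have := congrArg Matrix.det h
      rw [Matrix.det_mul, Matrix.det_mul, mul_comm P.det A.det] at this
      exact mul_right_cancel₀ hdP this
    have e1 : y1' ^ N = y1 ^ N := by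
      have h := key _ _ h1
      rw [detX1, detX1] at h
      have hC : (∏ i : Fin N, q ^ (2 * (i : ℕ))) ≠ 0 :=
        Finset.prod_ne_zero_iff.mpr fun i _ => pow_ne_zero _ hq0
      exact (mul_right_cancel₀ hC h).symm
    have e2 : y2' ^ N = y2 ^ N := by
      have h := key _ _ h2
      rw [detX2, detX2] at h
      have hs : ((Equiv.Perm.sign (Equiv.subRight (1 : Fin N))) : ℂ) ≠ 0 := by
        rcases Int.units_eq_one_or (Equiv.Perm.sign (Equiv.subRight (1 : Fin N))) with h' | h' <;>
          simp [h']
      exact (mul_left_cancel₀ hs h).symm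
    have e3 : y3' ^ N = y3 ^ N := by
      have h := key _ _ h3
      rw [detX3, detX3] at h
      have hs : ((Equiv.Perm.sign (Equiv.addRight (1 : Fin N))) : ℂ) ≠ 0 := by
        rcases Int.units_eq_one_or (Equiv.Perm.sign (Equiv.addRight (1 : Fin N))) with h' | h' <;>
          simp [h']
      have hC : (∏ i : Fin N, q ^ ((1:ℤ) - 2 * ((i : ℕ) : ℤ))) ≠ 0 :=
        Finset.prod_ne_zero_iff.mpr fun i _ => zpow_ne_zero _ hq0
      have h' := mul_left_cancel₀ hs h
      exact (mul_right_cancel₀ hC h').symm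
    refine ⟨e1, e2, e3, ?_⟩
    -- the central element H
    have hPH : P * (triX1 N q y1 * triX2 N y2 * triX3 N q y3)
        = (triX1 N q y1' * triX2 N y2' * triX3 N q y3') * P := by
      calc P * (triX1 N q y1 * triX2 N y2 * triX3 N q y3)
          = ((P * triX1 N q y1) * triX2 N y2) * triX3 N q y3 := by
            rw [← mul_assoc, ← mul_assoc]
        _ = ((triX1 N q y1' * P) * triX2 N y2) * triX3 N q y3 := by rw [h1]
        _ = (triX1 N q y1' * (P * triX2 N y2)) * triX3 N q y3 := by
            rw [mul_assoc (triX1 N q y1') P (triX2 N y2)]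
        _ = (triX1 N q y1' * (triX2 N y2' * P)) * triX3 N q y3 := by rw [h2]
        _ = (triX1 N q y1' * triX2 N y2') * (P * triX3 N q y3) := by
            rw [← mul_assoc, mul_assoc]
        _ = (triX1 N q y1' * triX2 N y2') * (triX3 N q y3' * P) := by rw [h3]
        _ = (triX1 N q y1' * triX2 N y2' * triX3 N q y3') * P := by rw [← mul_assoc]
    rw [triH N q hq0 hu1, triH N q hq0 hu1, Matrix.mul_smul, mul_one, Matrix.smul_mul, one_mul]
      at hPH
    have hPne : P ≠ 0 := by
      intro h
      rw [h] at hPu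
      exact not_isUnit_zero hPu
    have := smul_left_injective ℂ hPne hPH.symm
    exact mul_left_cancel₀ hq0 this
  · rintro ⟨e1, e2, e3, e4⟩
    set t : ℂ := y2' / y2 with ht_def
    have ht : t ≠ 0 := div_ne_zero hy2' hy2
    have htN : t ^ N = 1 := by
      rw [ht_def, div_pow, e2, div_self (pow_ne_zero _ hy2)]
    have hr : (y1 / y1') ^ N = 1 := by
      rw [div_pow, e1, div_self (pow_ne_zero _ hy1)]
    obtain ⟨k, hkN, hk⟩ := hq.eq_pow_of_pow_eq_one hr
    have hk' : y1' * (q ^ 2) ^ k = y1 := by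
      rw [hk]; field_simp
    set κ : Fin N := ⟨k, hkN⟩ with hκ_def
    set P : Matrix (Fin N) (Fin N) ℂ :=
      Matrix.of (fun j i => if j = i + κ then t ^ (i : ℕ) else 0) with hP_def
    have hPapp : ∀ j i, P j i = if j = i + κ then t ^ (i : ℕ) else 0 := fun _ _ => rfl
    set Q : Matrix (Fin N) (Fin N) ℂ :=
      Matrix.of (fun j i => if j = i - κ then (t ^ (((i - κ : Fin N)) : ℕ))⁻¹ else 0) with hQ_def
    have hPQ : P * Q = 1 := by
      ext j i
      rw [Matrix.mul_apply, Finset.sum_eq_single (i - κ)]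
      · by_cases h : j = i
        · subst h
          simp [hP_def, hQ_def, sub_add_cancel, mul_inv_cancel₀ (pow_ne_zero _ ht),
            Matrix.one_apply]
        · simp [hP_def, hQ_def, sub_add_cancel, h, Matrix.one_apply_ne h]
      · intro c _ hc
        simp [hQ_def, hc]
      · simp
    have hQP : Q * P = 1 := by
      ext j i
      rw [Matrix.mul_apply, Finset.sum_eq_single (i + κ)]
      · by_cases h : j = i
        · subst h
          simp [hP_def, hQ_def, add_sub_cancel_right, inv_mul_cancel₀ (pow_ne_zero _ ht),
            Matrix.one_apply]
        · simp [hP_def, hQ_def, add_sub_cancel_right, h, Matrix.one_apply_ne h]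
      · intro c _ hc
        simp [hP_def, fun h : c = i + κ => hc h]
      · simp
    have hPinv : Invertible P := ⟨Q, hQP, hPQ⟩
    refine ⟨P, isUnit_of_invertible P, ?_, ?_, ?_⟩
    · -- X1 intertwining
      ext j i
      simp only [triX1]
      rw [Matrix.mul_diagonal, Matrix.diagonal_mul]
      simp only [hP_def, Matrix.of_apply]
      by_cases h : j = i + κ
      · rw [if_pos h, h]
        have : q ^ (2 * (((i + κ : Fin N)) : ℕ)) = q ^ (2 * (i : ℕ)) * (q ^ 2) ^ k := by
          rw [pow_mul, pow_mul, Fin.val_add, pow_mod_eq hu1, pow_add]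
        rw [this]
        have : y1' * (q ^ (2 * (i : ℕ)) * (q ^ 2) ^ k) = y1 * q ^ (2 * (i : ℕ)) := by
          rw [← hk']; ring
        rw [this]; ring
      · rw [if_neg h, zero_mul, mul_zero]
    · -- X2 intertwining
      ext j i
      rw [mul_triX2, triX2_mul]
      simp only [hP_def, Matrix.of_apply]
      by_cases h : j = (i + 1) + κ
      · rw [if_pos h, if_pos (show j - 1 = i + κ from by rw [h]; abel)]
        have hval : t ^ (((i + 1 : Fin N)) : ℕ) = t ^ (i : ℕ) * t := by
          rw [Fin.val_add, pow_mod_eq htN, pow_add, Fin.val_one', pow_mod_eq htN, pow_one]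
        rw [hval, ht_def]
        field_simp
      · rw [if_neg h, if_neg, zero_mul, mul_zero]
        intro h'
        apply h
        have := congrArg (· + (1 : Fin N)) h'
        simp only [sub_add_cancel] at this
        rw [this]; abel
    · -- X3 intertwining
      ext j i
      rw [mul_triX3, triX3_mul]
      simp only [hP_def, Matrix.of_apply]
      by_cases h : j = (i - 1) + κ
      · rw [if_pos h, if_pos (show j + 1 = i + κ from by rw [h]; abel)]
        rw [show j + 1 = i + κ from by rw [h]; abel]
        have hstep : t ^ (i : ℕ) = t ^ (((i - 1 : Fin N)) : ℕ) * t := by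
          conv_lhs => rw [show i = (i - 1) + 1 from (sub_add_cancel i 1).symm]
          rw [Fin.val_add, pow_mod_eq htN, pow_add, Fin.val_one', pow_mod_eq htN, pow_one]
        have hzp : ∀ m : ℕ, q ^ ((1:ℤ) - 2 * (m : ℤ)) = q * (((q ^ 2) ^ m)⁻¹ : ℂ) := by
          intro m
          calc q ^ ((1:ℤ) - 2 * (m : ℤ)) = q ^ ((1:ℤ) + -(2 * (m : ℤ))) := by rw [sub_eq_add_neg]
            _ = q * q ^ (-(2 * (m : ℤ))) := by rw [zpow_add₀ hq0, zpow_one]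
            _ = q * (((q ^ 2) ^ m)⁻¹ : ℂ) := by
                rw [← pow_mul, ← zpow_natCast q (2 * m), ← zpow_neg]
                norm_cast
        have hval2 : ((q:ℂ) ^ 2) ^ (((i + κ : Fin N)) : ℕ) = (q ^ 2) ^ (i : ℕ) * (q ^ 2) ^ k := by
          rw [Fin.val_add, pow_mod_eq hu1, pow_add]
        have hKne : ((q:ℂ) ^ 2) ^ k ≠ 0 := pow_ne_zero _ (pow_ne_zero _ hq0)
        have hUne : ((q:ℂ) ^ 2) ^ (i : ℕ) ≠ 0 := pow_ne_zero _ (pow_ne_zero _ hq0)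
        have hscal : y3 = y3' * (((q ^ 2) ^ k)⁻¹ : ℂ) * t := by
          rw [hk, ht_def]
          field_simp
          linear_combination -e4
        rw [hzp, hzp, hval2, hstep, hscal]
        field_simp
      · rw [if_neg h, if_neg, zero_mul, mul_zero]
        intro h'
        apply h
        have := congrArg (· - (1 : Fin N)) h'
        simp only [add_sub_cancel_right] at this
        rw [this]; abel
end
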